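/- arXiv:1801.05774 — 2 statements merged into one kernel-verified Lean document; each statement's English description precedes it below -/
import Mathlib

section
/- For quaternions u₁, u₂, u₃, the triple commutator T(u₁,u₂,u₃) = ((u₁ * conj u₂)u₃ - u₃(conj u₂ * u₁))/2 is orthogonal to each of its arguments: ⟪T(u₁,u₂,u₃), u₁⟫ = ⟪T(u₁,u₂,u₃), u₂⟫ = ⟪T(u₁,u₂,u₃), u₃⟫ = 0. -/
/-!
The real part is cyclic, `re (a * b) = re (b * a)`, and `u * star u = star u * u = normSq u` is a
central scalar. Pairing `u₁ * star u₂ * u₃ - u₃ * (star u₂ * u₁)` with `u₁` or `u₃` therefore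
cancels that argument against its conjugate, leaving `normSq` times `re (a * b) - re (b * a) = 0`;
pairing it with `u₂` compares `re (x * y)` with `re (y * x)` for `x = u₁ * star u₂`,
`y = u₃ * star u₂`.
-/

noncomputable def qinner (u v : Quaternion ℝ) : ℝ := (u * star v).re

namespace Quaternion

variable {R : Type*} [CommRing R]

theorem re_mul_comm (a b : ℍ[R]) : (a * b).re = (b * a).re := by
  simp only [re_mul]
  ring

theorem re_mul_mul_star_self (a b : ℍ[R]) : (a * b * star b).re = normSq b * a.re := by
  rw [mul_assoc, self_mul_star, mul_coe_eq_smul, re_smul, smul_eq_mul]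

theorem re_star_self_mul_mul (a b : ℍ[R]) : (star a * a * b).re = normSq a * b.re := by
  rw [star_mul_self, coe_mul_eq_smul, re_smul, smul_eq_mul]

def tripleComm (u₁ u₂ u₃ : ℍ[R]) : ℍ[R] := u₁ * star u₂ * u₃ - u₃ * (star u₂ * u₁)

theorem re_tripleComm_mul_star_left (u₁ u₂ u₃ : ℍ[R]) :
    (tripleComm u₁ u₂ u₃ * star u₁).re = 0 := by
  have h : (u₁ * star u₂ * u₃ * star u₁).re = (star u₁ * u₁ * (star u₂ * u₃)).re := by
    rw [re_mul_comm _ (star u₁)]; simp only [mul_assoc]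
  rw [tripleComm, sub_mul, re_sub, h, re_star_self_mul_mul, ← mul_assoc u₃, re_mul_mul_star_self,
    re_mul_comm u₃, sub_self]

theorem re_tripleComm_mul_star_middle (u₁ u₂ u₃ : ℍ[R]) :
    (tripleComm u₁ u₂ u₃ * star u₂).re = 0 := by
  rw [tripleComm, sub_mul, re_sub, sub_eq_zero, mul_assoc (u₁ * star u₂),
    re_mul_comm (u₁ * star u₂)]
  simp only [mul_assoc]

theorem re_tripleComm_mul_star_right (u₁ u₂ u₃ : ℍ[R]) :
    (tripleComm u₁ u₂ u₃ * star u₃).re = 0 := by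
  have h : (u₃ * (star u₂ * u₁) * star u₃).re = (star u₃ * u₃ * (star u₂ * u₁)).re := by
    rw [re_mul_comm _ (star u₃)]; simp only [mul_assoc]
  rw [tripleComm, sub_mul, re_sub, h, re_star_self_mul_mul, re_mul_mul_star_self,
    re_mul_comm u₁, sub_self]

end Quaternion

open Quaternion

theorem qinner_div_two_left (x v : ℍ[ℝ]) : qinner (x / 2) v = qinner x v / 2 := by
  have : x / 2 = (2⁻¹ : ℝ) • x := by
    rw [div_eq_mul_inv, ← mul_coe_eq_smul, coe_inv]; rfl
  rw [qinner, qinner, this, smul_mul_assoc, re_smul, smul_eq_mul, inv_mul_eq_div]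

theorem stmt14 (u₁ u₂ u₃ : Quaternion ℝ) :
    qinner (((u₁ * star u₂) * u₃ - u₃ * (star u₂ * u₁)) / 2) u₁ = 0 ∧
    qinner (((u₁ * star u₂) * u₃ - u₃ * (star u₂ * u₁)) / 2) u₂ = 0 ∧
    qinner (((u₁ * star u₂) * u₃ - u₃ * (star u₂ * u₁)) / 2) u₃ = 0 := by
  simp only [qinner_div_two_left, div_eq_zero_iff, two_ne_zero, or_false]
  exact ⟨re_tripleComm_mul_star_left u₁ u₂ u₃, re_tripleComm_mul_star_middle u₁ u₂ u₃,
    re_tripleComm_mul_star_right u₁ u₂ u₃⟩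
end

section
/- For quaternions u₁, u₂, u₃, the squared norm of the triple anticommutator A(u₁,u₂,u₃) = ⟪u₁,u₂⟫•u₃ - ⟪u₁,u₃⟫•u₂ + ⟪u₂,u₃⟫•u₁ equals ⟪u₁,u₁⟫⟪u₂,u₂⟫⟪u₃,u₃⟫ minus the Gram determinant det[[⟪u₁,u₁⟫,⟪u₁,u₂⟫,⟪u₁,u₃⟫],[⟪u₁,u₂⟫,⟪u₂,u₂⟫,⟪u₂,u₃⟫],[⟪u₁,u₃⟫,⟪u₂,u₃⟫,⟪u₃,u₃⟫]]. -/
/-! Writing `gᵢⱼ` for the Gram entries, bilinearity and symmetry alone reduce both sides to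
`g₁₂² g₃₃ + g₁₃² g₂₂ + g₂₃² g₁₁ - 2 g₁₂ g₁₃ g₂₃`, so the identity holds in every real inner
product space. -/

open scoped RealInnerProductSpace

theorem real_inner_self_smul_sub_smul_add_smul_eq_sub_det_gram {E : Type*}
    [NormedAddCommGroup E] [InnerProductSpace ℝ E] (x y z : E) :
    ⟪⟪x, y⟫ • z - ⟪x, z⟫ • y + ⟪y, z⟫ • x, ⟪x, y⟫ • z - ⟪x, z⟫ • y + ⟪y, z⟫ • x⟫ =
      ⟪x, x⟫ * ⟪y, y⟫ * ⟪z, z⟫ -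
        Matrix.det !![⟪x, x⟫, ⟪x, y⟫, ⟪x, z⟫;
                      ⟪x, y⟫, ⟪y, y⟫, ⟪y, z⟫;
                      ⟪x, z⟫, ⟪y, z⟫, ⟪z, z⟫] := by
  simp only [Matrix.det_fin_three, Matrix.of_apply, Matrix.cons_val', Matrix.cons_val_zero,
    Matrix.cons_val_one, Matrix.cons_val_two, Matrix.head_cons, Matrix.tail_cons,
    Matrix.empty_val', Matrix.cons_val_fin_one, Matrix.head_fin_const, inner_add_left,
    inner_add_right, inner_sub_left, inner_sub_right, real_inner_smul_left, real_inner_smul_right]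
  rw [real_inner_comm x y, real_inner_comm x z, real_inner_comm y z]
  ring

theorem qinner_eq_inner (u v : Quaternion ℝ) : qinner u v = ⟪u, v⟫ :=
  (Quaternion.inner_def u v).symm

theorem stmt17 (u₁ u₂ u₃ : Quaternion ℝ) :
    qinner ((qinner u₁ u₂) • u₃ - (qinner u₁ u₃) • u₂ + (qinner u₂ u₃) • u₁)
           ((qinner u₁ u₂) • u₃ - (qinner u₁ u₃) • u₂ + (qinner u₂ u₃) • u₁) =
      qinner u₁ u₁ * qinner u₂ u₂ * qinner u₃ u₃ -
        Matrix.det !![qinner u₁ u₁, qinner u₁ u₂, qinner u₁ u₃;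
                      qinner u₁ u₂, qinner u₂ u₂, qinner u₂ u₃;
                      qinner u₁ u₃, qinner u₂ u₃, qinner u₃ u₃] := by
  simp only [qinner_eq_inner]
  exact real_inner_self_smul_sub_smul_add_smul_eq_sub_det_gram u₁ u₂ u₃
end
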